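/- arXiv:2302.14324 — 3 statements merged into one kernel-verified Lean document; each statement's English description precedes it below -/
import Mathlib

section
/- Let Δ ∈ (0, 1], let S ⊆ [−Δ, Δ] be a set of reals, let f : ℝ → ℝ, let ε > 0, and let p ∈ ℝ[X] be a polynomial such that |p(x) − f(x)| ≤ ε for all x ∈ S and |p(x)| ≤ 1 for all x ∈ [−1, 1]. Then for all x, y ∈ S with x ≠ y, the degree of p satisfies deg p ≥ √(1 − Δ²) · (|f(x) − f(y)| − 2ε) / |x − y|. -/
/-!
For `n = deg p`, `T θ = p (cos θ)` is a trigonometric polynomial of degree `n`. M. Riesz's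
interpolation formula writes `T' t = ∑ k < 2n, μₖ T (t + tₖ)` with nodes `tₖ = (2k+1)π/(2n)` and
weights `μₖ = (-1)ᵏ / (4n sin² (tₖ/2))` satisfying `∑ |μₖ| = n`; so `|p| ≤ 1` on `[-1, 1]` makes `T`
`n`-Lipschitz (Bernstein's inequality). Since `arccos` is `1/√(1-Δ²)`-Lipschitz on `[-Δ, Δ]`,
`√(1-Δ²) |p x - p y| ≤ n |x - y|` there, while `|p x - p y| ≥ |f x - f y| - 2ε`.
-/

open Real Polynomial Finset
open scoped Complex
open Complex (I)

theorem eq_add_mul_of_sub_eq_sub {R : Type*} [CommRing R] {a : ℕ → R} {N : ℕ}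
    (h : ∀ j < N, a (j + 2) - a (j + 1) = a (j + 1) - a j) :
    ∀ j ≤ N + 1, a j = a 0 + j * (a 1 - a 0) := by
  have hstep : ∀ j ≤ N, a (j + 1) - a j = a 1 - a 0 := by
    intro j hj
    induction j with
    | zero => rfl
    | succ j ih => rw [h j (by omega), ih (by omega)]
  intro j hj
  induction j with
  | zero => simp
  | succ j ih =>
    rw [← sub_add_cancel (a (j + 1)) (a j), hstep j (by omega), ih (by omega)]
    push_cast
    ring

theorem two_mul_sum_range_of_reflect {R : Type*} [CommSemiring R] {g : ℕ → R} {m : ℕ} {c : R}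
    (h : ∀ k < m, g (m - 1 - k) + g k = c) : 2 * ∑ k ∈ range m, g k = m * c := by
  rw [two_mul]
  nth_rewrite 1 [← sum_range_reflect]
  rw [← sum_add_distrib, sum_congr rfl fun k hk => h k (mem_range.mp hk)]
  simp

namespace RieszInterpolation

noncomputable def node (n k : ℕ) : ℝ := (2 * k + 1) * π / (2 * n)

noncomputable def root (n k : ℕ) : ℂ := cexp (node n k * I)

noncomputable def weight (n k : ℕ) : ℝ := (-1) ^ k / (4 * n * Real.sin (node n k / 2) ^ 2)

variable {n : ℕ}

theorem root_eq (hn : n ≠ 0) (k : ℕ) :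
    root n k = cexp (π * I / (2 * n)) * cexp (2 * π * I / ↑(2 * n)) ^ k := by
  rw [root, ← Complex.exp_nat_mul, ← Complex.exp_add, node]
  congr 1
  push_cast
  field_simp
  ring

theorem root_pow_two_mul (hn : n ≠ 0) (k : ℕ) : root n k ^ (2 * n) = -1 := by
  rw [root, ← Complex.exp_nat_mul, node]
  have : ((2 * n : ℕ) : ℂ) * (↑((2 * k + 1) * π / (2 * n)) * I) = (2 * k + 1 : ℕ) * (π * I) := by
    push_cast
    field_simp
  rw [this, Complex.exp_nat_mul, Complex.exp_pi_mul_I, pow_succ, pow_mul]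
  norm_num

theorem root_pow_self (hn : n ≠ 0) (k : ℕ) : root n k ^ n = I * (-1) ^ k := by
  rw [root, ← Complex.exp_nat_mul, node]
  have : (n : ℂ) * (↑((2 * k + 1) * π / (2 * n)) * I) = π / 2 * I + k * (π * I) := by
    push_cast
    field_simp
    ring
  rw [this, Complex.exp_add, Complex.exp_nat_mul, Complex.exp_pi_mul_I,
    Complex.exp_pi_div_two_mul_I]

theorem root_ne_one (hn : n ≠ 0) (k : ℕ) : root n k ≠ 1 := by
  intro h
  have := root_pow_two_mul hn k
  rw [h, one_pow] at this
  norm_num at this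

theorem root_reflect_mul_root (hn : n ≠ 0) {k : ℕ} (hk : k < 2 * n) :
    root n (2 * n - 1 - k) * root n k = 1 := by
  rw [root, root, ← Complex.exp_add, ← add_mul, node, node,
    Nat.cast_sub (by omega), Nat.cast_sub (by omega)]
  convert Complex.exp_two_pi_mul_I using 2
  push_cast
  field_simp
  ring

theorem sum_root_pow_eq_zero (hn : n ≠ 0) {s : ℕ} (hs₀ : s ≠ 0) (hs : s < 2 * n) :
    ∑ k ∈ range (2 * n), root n k ^ s = 0 := by
  have hζ := Complex.isPrimitiveRoot_exp (2 * n) (by omega)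
  have hζs : cexp (2 * π * I / ↑(2 * n)) ^ s ≠ 1 := hζ.pow_ne_one_of_pos_of_lt hs₀ hs
  have hpow : (cexp (2 * π * I / ↑(2 * n)) ^ s) ^ (2 * n) = 1 := by
    rw [← pow_mul, mul_comm s, pow_mul, hζ.pow_eq_one, one_pow]
  simp_rw [root_eq hn, mul_pow, ← pow_mul, mul_comm _ s, pow_mul, ← mul_sum, geom_sum_eq hζs, hpow]
  simp

theorem root_sub_one_sq (k : ℕ) :
    (root n k - 1) ^ 2 = -4 * (Real.sin (node n k / 2) : ℂ) ^ 2 * root n k := by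
  have hroot : root n k = cexp (↑(node n k / 2) * I) ^ 2 := by
    rw [root, ← Complex.exp_nat_mul]; push_cast; ring_nf
  have hinv : cexp (-↑(node n k / 2) * I) = (cexp (↑(node n k / 2) * I))⁻¹ := by
    rw [neg_mul, Complex.exp_neg]
  rw [Complex.ofReal_sin, Complex.sin, hinv, hroot]
  have := Complex.exp_ne_zero (↑(node n k / 2) * I)
  field_simp
  linear_combination 4 * (cexp (↑(node n k / 2) * I) ^ 2 - 1) ^ 2 * Complex.I_sq

theorem sin_node_div_two_pos (hn : n ≠ 0) {k : ℕ} (hk : k < 2 * n) :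
    0 < Real.sin (node n k / 2) := by
  have hk' : (2 * k + 1 : ℝ) < 4 * n := by exact_mod_cast (by omega : 2 * k + 1 < 4 * n)
  have hn' : (0 : ℝ) < n := by positivity
  apply Real.sin_pos_of_pos_of_lt_pi
  · rw [node]; positivity
  · rw [node, div_div, div_lt_iff₀ (by positivity)]
    nlinarith [Real.pi_pos]

theorem weight_eq (hn : n ≠ 0) {k : ℕ} (hk : k < 2 * n) :
    (weight n k : ℂ) = I * root n k ^ (n + 1) / (n * (root n k - 1) ^ 2) := by
  have hs : (Real.sin (node n k / 2) : ℂ) ≠ 0 := by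
    exact_mod_cast (sin_node_div_two_pos hn hk).ne'
  have hroot : root n k ≠ 0 := Complex.exp_ne_zero _
  rw [root_sub_one_sq, pow_succ, root_pow_self hn, weight]
  generalize Real.sin (node n k / 2) = s at hs ⊢
  push_cast
  field_simp
  linear_combination Complex.I_sq

theorem abs_weight (hn : n ≠ 0) {k : ℕ} (hk : k < 2 * n) :
    |weight n k| = (-1) ^ k * weight n k := by
  have hpos : 0 < 4 * n * Real.sin (node n k / 2) ^ 2 := by
    have := sin_node_div_two_pos hn hk
    positivity
  rw [weight, abs_div, abs_of_pos hpos, mul_div_assoc', ← pow_add, ← two_mul, pow_mul]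
  simp

/-- With `wₖ = root n k`, `weight_eq` gives `∑ μₖ wₖ ^ m = (i / n) * powSum n (m + n + 1)`. The
second differences of `powSum n` are power sums of the `2n`-th roots `wₖ` of `-1`, hence vanish, so
`powSum n` is affine on `[1, 2n + 1]`; the involution `wₖ ↦ wₖ⁻¹` determines its slope and zero. -/
noncomputable def powSum (n j : ℕ) : ℂ := ∑ k ∈ range (2 * n), root n k ^ j / (root n k - 1) ^ 2

theorem powSum_add_two (hn : n ≠ 0) {j : ℕ} (hj₀ : j ≠ 0) (hj : j < 2 * n) :
    powSum n (j + 2) - powSum n (j + 1) = powSum n (j + 1) - powSum n j := by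
  have hterm : ∀ k ∈ range (2 * n), root n k ^ (j + 2) / (root n k - 1) ^ 2
      - 2 * (root n k ^ (j + 1) / (root n k - 1) ^ 2) + root n k ^ j / (root n k - 1) ^ 2
      = root n k ^ j := by
    intro k _
    have := sub_ne_zero.mpr (root_ne_one hn k)
    field_simp
    ring
  have hsum := sum_congr rfl hterm
  rw [sum_add_distrib, sum_sub_distrib, ← mul_sum, sum_root_pow_eq_zero hn hj₀ hj] at hsum
  unfold powSum
  linear_combination hsum

theorem powSum_two_sub_powSum_one (hn : n ≠ 0) : powSum n 2 - powSum n 1 = n := by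
  have hterm : ∀ k ∈ range (2 * n),
      root n k ^ 2 / (root n k - 1) ^ 2 - root n k ^ 1 / (root n k - 1) ^ 2
        = root n k / (root n k - 1) := by
    intro k _
    have := sub_ne_zero.mpr (root_ne_one hn k)
    field_simp
  have hpair : ∀ k < 2 * n, root n (2 * n - 1 - k) / (root n (2 * n - 1 - k) - 1)
      + root n k / (root n k - 1) = 1 := by
    intro k hk
    have hvw := root_reflect_mul_root hn hk
    have hv := sub_ne_zero.mpr (root_ne_one hn (2 * n - 1 - k))
    have hw := sub_ne_zero.mpr (root_ne_one hn k)
    rw [div_add_div _ _ hv hw, div_eq_one_iff_eq (mul_ne_zero hv hw)]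
    linear_combination hvw
  have := two_mul_sum_range_of_reflect (g := fun k => root n k / (root n k - 1)) hpair
  rw [powSum, powSum, ← sum_sub_distrib, sum_congr rfl hterm]
  push_cast at this
  linear_combination this / 2

theorem powSum_succ_self (hn : n ≠ 0) : powSum n (n + 1) = 0 := by
  have hpair : ∀ k < 2 * n, root n (2 * n - 1 - k) ^ (n + 1) / (root n (2 * n - 1 - k) - 1) ^ 2
      + root n k ^ (n + 1) / (root n k - 1) ^ 2 = 0 := by
    intro k hk
    have hvw := root_reflect_mul_root hn hk
    have hv := sub_ne_zero.mpr (root_ne_one hn (2 * n - 1 - k))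
    have hw := sub_ne_zero.mpr (root_ne_one hn k)
    have hw₀ : root n k ^ (n + 1) ≠ 0 := pow_ne_zero _ (Complex.exp_ne_zero _)
    have h2n : root n k ^ (n + 1) * root n k ^ (n + 1) = -root n k ^ 2 := by
      rw [← pow_add, show n + 1 + (n + 1) = 2 * n + 2 by ring, pow_add, root_pow_two_mul hn]
      ring
    rw [div_add_div _ _ (pow_ne_zero 2 hv) (pow_ne_zero 2 hw), div_eq_zero_iff, or_iff_left
      (mul_ne_zero (pow_ne_zero 2 hv) (pow_ne_zero 2 hw))]
    refine (mul_eq_zero_iff_right hw₀).mp ?_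
    have hvw' : root n (2 * n - 1 - k) ^ (n + 1) * root n k ^ (n + 1) = 1 := by
      rw [← mul_pow, hvw, one_pow]
    linear_combination (root n k - 1) ^ 2 * hvw' + (root n (2 * n - 1 - k) - 1) ^ 2 * h2n
      - ((root n (2 * n - 1 - k) - 1) * root n k + 1 - root n k) * hvw
  have := two_mul_sum_range_of_reflect
    (g := fun k => root n k ^ (n + 1) / (root n k - 1) ^ 2) hpair
  rw [powSum]
  simpa using this

theorem powSum_eq (hn : n ≠ 0) {j : ℕ} (hj₀ : j ≠ 0) (hj : j ≤ 2 * n + 1) :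
    powSum n j = n * (j - 1 - n) := by
  have haff := eq_add_mul_of_sub_eq_sub (a := fun i => powSum n (i + 1)) (N := 2 * n - 1)
    fun i hi => powSum_add_two hn (Nat.succ_ne_zero i) (by omega)
  simp only [zero_add, one_add_one_eq_two, powSum_two_sub_powSum_one hn] at haff
  have h₁ : powSum n 1 = -(n * n) := by
    have := haff n (by omega)
    rw [powSum_succ_self hn] at this
    linear_combination -this
  obtain ⟨i, rfl⟩ := Nat.exists_eq_succ_of_ne_zero hj₀
  rw [haff i (by omega), h₁]
  push_cast
  ring

theorem sum_weight_mul_zpow {m : ℤ} (hm : |m| ≤ n) :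
    ∑ k ∈ range (2 * n), (weight n k : ℂ) * root n k ^ m = I * m := by
  rcases eq_or_ne n 0 with rfl | hn
  · obtain rfl : m = 0 := abs_nonpos_iff.mp (by exact_mod_cast hm)
    simp
  rw [abs_le] at hm
  obtain ⟨j, hj⟩ : ∃ j : ℕ, (j : ℤ) = m + n + 1 :=
    ⟨(m + n + 1).toNat, Int.toNat_of_nonneg (by omega)⟩
  have hterm : ∀ k ∈ range (2 * n),
      (weight n k : ℂ) * root n k ^ m = I / n * (root n k ^ j / (root n k - 1) ^ 2) := by
    intro k hk
    have hroot : root n k ≠ 0 := Complex.exp_ne_zero _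
    have hpow : root n k ^ (n + 1) * root n k ^ m = root n k ^ j := by
      rw [← zpow_natCast, ← zpow_natCast, ← zpow_add₀ hroot, hj]
      push_cast
      ring_nf
    rw [weight_eq hn (mem_range.mp hk), div_mul_eq_mul_div, mul_assoc, hpow, mul_comm (n : ℂ),
      ← div_div, div_mul_eq_mul_div, mul_div_assoc]
  rw [sum_congr rfl hterm, ← mul_sum, ← powSum, powSum_eq hn (by omega) (by omega)]
  have hjC : (j : ℂ) = m + n + 1 := by exact_mod_cast hj
  have : (n : ℂ) ≠ 0 := Nat.cast_ne_zero.mpr hn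
  rw [hjC]
  field_simp
  ring

theorem sum_abs_weight : ∑ k ∈ range (2 * n), |weight n k| = n := by
  rcases eq_or_ne n 0 with rfl | hn
  · simp
  have h := sum_weight_mul_zpow (n := n) (m := n) (by simp)
  simp_rw [zpow_natCast, root_pow_self hn, mul_left_comm _ I, ← mul_sum, Int.cast_natCast] at h
  have h' : ∑ k ∈ range (2 * n), ((-1) ^ k * weight n k : ℂ) = n := by
    rw [← mul_right_inj' Complex.I_ne_zero, ← h]
    simp_rw [mul_comm]
  rw [sum_congr rfl fun k hk => abs_weight hn (mem_range.mp hk)]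
  exact_mod_cast h'

/-- M. Riesz's interpolation formula for trigonometric polynomials of degree at most `n`. -/
theorem hasDerivAt_sum_exp {ι : Type*} (s : Finset ι) (c : ι → ℂ) (m : ι → ℤ)
    (hm : ∀ i ∈ s, |m i| ≤ n) (t : ℝ) :
    HasDerivAt (fun θ : ℝ => ∑ i ∈ s, c i * cexp (m i * θ * I))
      (∑ k ∈ range (2 * n), (weight n k : ℂ) *
        ∑ i ∈ s, c i * cexp (m i * ↑(t + node n k) * I)) t := by
  have hderiv : HasDerivAt (fun θ : ℝ => ∑ i ∈ s, c i * cexp (m i * θ * I))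
      (∑ i ∈ s, c i * (cexp (m i * t * I) * (m i * I))) t := by
    refine HasDerivAt.fun_sum fun i _ => HasDerivAt.const_mul _ ?_
    have := (((hasDerivAt_id t).ofReal_comp.const_mul (m i : ℂ)).mul_const I).cexp
    simpa only [id, Complex.ofReal_one, mul_one] using this
  convert hderiv using 1
  have hshift : ∀ i k, cexp (m i * ↑(t + node n k) * I) = cexp (m i * t * I) * root n k ^ m i := by
    intro i k
    rw [root, ← Complex.exp_int_mul, ← Complex.exp_add]
    push_cast
    ring_nf
  simp_rw [hshift, mul_sum, ← mul_assoc]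
  rw [sum_comm]
  refine sum_congr rfl fun i hi => ?_
  calc _ = c i * cexp (m i * t * I) * ∑ k ∈ range (2 * n), (weight n k : ℂ) * root n k ^ m i := by
        rw [mul_sum]
        exact sum_congr rfl fun k _ => by ring
    _ = _ := by
        rw [sum_weight_mul_zpow (hm i hi)]
        ring

theorem cos_pow_eq_sum (j : ℕ) (z : ℂ) :
    Complex.cos z ^ j = ∑ r ∈ range (j + 1),
      (j.choose r / 2 ^ j : ℂ) * cexp (((2 * r - j : ℤ) : ℂ) * z * I) := by
  have he : cexp (z * I) ≠ 0 := Complex.exp_ne_zero _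
  have hexp : ∀ r ∈ range (j + 1), cexp (((2 * r - j : ℤ) : ℂ) * z * I)
      = cexp (z * I) ^ r * (cexp (z * I))⁻¹ ^ (j - r) := by
    intro r hr
    rw [mul_assoc, Complex.exp_int_mul, ← zpow_natCast, ← zpow_natCast, inv_zpow', ← zpow_add₀ he]
    congr 1
    push_cast [Nat.cast_sub (Nat.lt_succ_iff.mp (mem_range.mp hr))]
    ring
  rw [Complex.cos, neg_mul, Complex.exp_neg, div_pow, add_pow, sum_div]
  refine sum_congr rfl fun r hr => ?_
  rw [hexp r hr]
  ring

theorem exists_eval_cos_eq_sum (p : ℝ[X]) :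
    ∃ (s : Finset ((_ : ℕ) × ℕ)) (c : (_ : ℕ) × ℕ → ℂ) (m : (_ : ℕ) × ℕ → ℤ),
      (∀ i ∈ s, |m i| ≤ p.natDegree) ∧
        ∀ θ : ℝ, ((p.eval (Real.cos θ) : ℝ) : ℂ) = ∑ i ∈ s, c i * cexp (m i * θ * I) := by
  refine ⟨(range (p.natDegree + 1)).sigma fun j => range (j + 1),
    fun i => p.coeff i.1 * (i.1.choose i.2 / 2 ^ i.1), fun i => 2 * i.2 - i.1, ?_, fun θ => ?_⟩
  · rintro ⟨j, r⟩ hi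
    simp only [mem_sigma, mem_range] at hi
    dsimp only
    rw [abs_le]
    omega
  rw [eval_eq_sum_range, sum_sigma]
  simp only [Complex.ofReal_sum, Complex.ofReal_mul, Complex.ofReal_pow, Complex.ofReal_cos]
  refine sum_congr rfl fun j _ => ?_
  rw [cos_pow_eq_sum, mul_sum]
  refine sum_congr rfl fun r _ => ?_
  ring

theorem hasDerivAt_eval_cos {p : ℝ[X]} (hp : p.natDegree ≤ n) (t : ℝ) :
    HasDerivAt (fun θ => p.eval (Real.cos θ))
      (∑ k ∈ range (2 * n), weight n k * p.eval (Real.cos (t + node n k))) t := by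
  obtain ⟨s, c, m, hm, hF⟩ := exists_eval_cos_eq_sum p
  have h := hasDerivAt_sum_exp s c m (fun i hi => (hm i hi).trans (by exact_mod_cast hp)) t
  simp_rw [← hF] at h
  have := (Complex.reCLM.hasFDerivAt).comp_hasDerivAt t h
  simpa [Function.comp_def] using this

end RieszInterpolation

open RieszInterpolation in
theorem Polynomial.abs_eval_cos_sub_eval_cos_le {p : ℝ[X]}
    (hp : ∀ x ∈ Set.Icc (-1 : ℝ) 1, |p.eval x| ≤ 1) (a b : ℝ) :
    |p.eval (Real.cos a) - p.eval (Real.cos b)| ≤ p.natDegree * |a - b| := by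
  set n := p.natDegree
  have hbernstein : ∀ t, |∑ k ∈ range (2 * n), weight n k * p.eval (Real.cos (t + node n k))| ≤ n :=
    fun t => calc
      _ ≤ ∑ k ∈ range (2 * n), |weight n k * p.eval (Real.cos (t + node n k))| :=
        abs_sum_le_sum_abs _ _
      _ ≤ ∑ k ∈ range (2 * n), |weight n k| := by
        refine sum_le_sum fun k _ => ?_
        rw [abs_mul]
        exact mul_le_of_le_one_right (abs_nonneg _) (hp _ ⟨neg_one_le_cos _, cos_le_one _⟩)
      _ = n := sum_abs_weight
  simpa using Convex.norm_image_sub_le_of_norm_hasDerivWithin_le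
    (fun t _ => (hasDerivAt_eval_cos le_rfl t).hasDerivWithinAt) (fun t _ => hbernstein t)
    convex_univ (Set.mem_univ b) (Set.mem_univ a)

theorem Real.sqrt_one_sub_sq_mul_abs_arccos_sub_arccos_le {Δ x y : ℝ} (hΔ : Δ < 1)
    (hx : x ∈ Set.Icc (-Δ) Δ) (hy : y ∈ Set.Icc (-Δ) Δ) :
    √(1 - Δ ^ 2) * |arccos x - arccos y| ≤ |x - y| := by
  have hsqrt : 0 < √(1 - Δ ^ 2) := Real.sqrt_pos.mpr (by nlinarith [hx.1, hx.2])
  have hderiv : ∀ t ∈ Set.Icc (-Δ) Δ, ‖-(1 / √(1 - t ^ 2))‖ ≤ 1 / √(1 - Δ ^ 2) := by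
    intro t ht
    have ht2 : t ^ 2 ≤ Δ ^ 2 := sq_le_sq' ht.1 ht.2
    rw [norm_neg, Real.norm_of_nonneg (by positivity)]
    exact one_div_le_one_div_of_le hsqrt (Real.sqrt_le_sqrt (by linarith))
  have hmvt := Convex.norm_image_sub_le_of_norm_hasDerivWithin_le (fun t ht =>
      (Real.hasDerivAt_arccos (by linarith [ht.1]) (by linarith [ht.2])).hasDerivWithinAt)
    hderiv (convex_Icc _ _) hy hx
  rw [Real.norm_eq_abs, Real.norm_eq_abs, div_mul_eq_mul_div, one_mul, le_div_iff₀ hsqrt] at hmvt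
  linarith

theorem Polynomial.sqrt_one_sub_sq_mul_abs_eval_sub_eval_le {p : ℝ[X]}
    (hp : ∀ x ∈ Set.Icc (-1 : ℝ) 1, |p.eval x| ≤ 1) {Δ x y : ℝ}
    (hx : x ∈ Set.Icc (-Δ) Δ) (hy : y ∈ Set.Icc (-Δ) Δ) :
    √(1 - Δ ^ 2) * |p.eval x - p.eval y| ≤ p.natDegree * |x - y| := by
  rcases le_or_gt 1 Δ with hΔ | hΔ
  · rw [Real.sqrt_eq_zero'.mpr (by nlinarith), zero_mul]
    positivity
  have hcos : ∀ z ∈ Set.Icc (-Δ) Δ, Real.cos (arccos z) = z := fun z hz =>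
    Real.cos_arccos (by linarith [hz.1]) (by linarith [hz.2])
  calc √(1 - Δ ^ 2) * |p.eval x - p.eval y|
      = √(1 - Δ ^ 2) * |p.eval (Real.cos (arccos x)) - p.eval (Real.cos (arccos y))| := by
        rw [hcos x hx, hcos y hy]
    _ ≤ √(1 - Δ ^ 2) * (p.natDegree * |arccos x - arccos y|) :=
        mul_le_mul_of_nonneg_left (abs_eval_cos_sub_eval_cos_le hp _ _) (Real.sqrt_nonneg _)
    _ = p.natDegree * (√(1 - Δ ^ 2) * |arccos x - arccos y|) := by ring
    _ ≤ p.natDegree * |x - y| := mul_le_mul_of_nonneg_left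
        (sqrt_one_sub_sq_mul_abs_arccos_sub_arccos_le hΔ hx hy) (Nat.cast_nonneg _)

theorem bounded_approx_degree_lower_bound_general
    (Δ : ℝ) (S : Set ℝ) (hS : S ⊆ Set.Icc (-Δ) Δ)
    (f : ℝ → ℝ) (ε : ℝ) (p : Polynomial ℝ)
    (happrox : ∀ x ∈ S, |p.eval x - f x| ≤ ε)
    (hbound : ∀ x : ℝ, x ∈ Set.Icc (-1 : ℝ) 1 → |p.eval x| ≤ 1) :
    ∀ x ∈ S, ∀ y ∈ S, x ≠ y →
      (p.natDegree : ℝ) ≥ Real.sqrt (1 - Δ ^ 2) * ((|f x - f y| - 2 * ε) / |x - y|) := by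
  intro x hx y hy hxy
  have hf : |f x - f y| - 2 * ε ≤ |p.eval x - p.eval y| := by
    have hx' := happrox x hx
    rw [abs_sub_comm] at hx'
    linarith [abs_sub_le (f x) (p.eval x) (f y), abs_sub_le (p.eval x) (p.eval y) (f y),
      happrox y hy]
  rw [ge_iff_le, ← mul_div_assoc, div_le_iff₀ (abs_pos.mpr (sub_ne_zero.mpr hxy))]
  calc √(1 - Δ ^ 2) * (|f x - f y| - 2 * ε)
      ≤ √(1 - Δ ^ 2) * |p.eval x - p.eval y| := mul_le_mul_of_nonneg_left hf (Real.sqrt_nonneg _)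
    _ ≤ p.natDegree * |x - y| := sqrt_one_sub_sq_mul_abs_eval_sub_eval_le hbound (hS hx) (hS hy)

/-- **Degree lower bound for bounded approximations**
(Proposition 3.18): if `p` approximates `f` to error `ε` on `S ⊆ [-Δ, Δ]` and
is bounded by `1` on `[-1, 1]`, then its degree is at least
`√(1-Δ²)·(|f(x) - f(y)| - 2ε)/|x - y|` for any distinct `x, y ∈ S`. -/
theorem bounded_approx_degree_lower_bound
    (Δ : ℝ) (hΔ : 0 < Δ) (hΔ1 : Δ ≤ 1) (S : Set ℝ) (hS : S ⊆ Set.Icc (-Δ) Δ)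
    (f : ℝ → ℝ) (ε : ℝ) (hε : 0 < ε) (p : Polynomial ℝ)
    (happrox : ∀ x ∈ S, |p.eval x - f x| ≤ ε)
    (hbound : ∀ x : ℝ, x ∈ Set.Icc (-1 : ℝ) 1 → |p.eval x| ≤ 1) :
    ∀ x ∈ S, ∀ y ∈ S, x ≠ y →
      (p.natDegree : ℝ) ≥ Real.sqrt (1 - Δ ^ 2) * ((|f x - f y| - 2 * ε) / |x - y|) :=
  bounded_approx_degree_lower_bound_general Δ S hS f ε p happrox hbound
end

section
/- There exists a universal constant c > 0 with the following property. Let β ≥ 1 be real, δ ∈ (0, 1], and let q ∈ ℝ[X] be a polynomial of degree d such that |q(x) − exp(β·x)| ≤ 0.1 for all x ∈ [−1, 0] and |q(x)| ≤ 1 for all x ∈ [0, δ]. Then d ≥ c·β·√δ. -/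
/-!
At `0` the polynomial is close to `1` and at `-1/(2β)` it is below `0.77`, so by the mean value
theorem `q' ≥ 4β/15` somewhere in `(-1/2, 0)`, while `|q| ≤ 1.1` on all of `[-1, δ]`. Bernstein's
inequality `|q'(x)| √((x - a)(b - x)) ≤ 4 n M` on `[a, b] = [-1, δ]` then forces `n ≥ β√δ / 33`.

Bernstein's inequality comes from the Joukowski map `w ↦ (w + w⁻¹)/2`. If `|Q| ≤ M` on `[-1, 1]`,
then `wⁿ Q((w + w⁻¹)/2)` is a polynomial bounded by `M` on the unit circle, hence on the unit disc,
so `|Q((w + w⁻¹)/2)| ≤ M ρⁿ` on the annulus `ρ⁻¹ ≤ |w| ≤ ρ`. Cauchy's estimate on the circle of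
radius `1/(2n)` around the point `x + i√(1 - x²)` bounds the derivative, and the Joukowski map has
derivative of modulus `√(1 - x²)` there.
-/

open Real Polynomial

namespace Polynomial

open Complex ComplexConjugate Metric

noncomputable def joukowskiLift (Q : ℂ[X]) (n : ℕ) : ℂ[X] :=
  ∑ i ∈ Finset.range (n + 1), C (Q.coeff i / 2 ^ i) * (X ^ 2 + 1) ^ i * X ^ (n - i)

theorem eval_joukowskiLift {Q : ℂ[X]} {n : ℕ} (hn : Q.natDegree ≤ n) {w : ℂ} (hw : w ≠ 0) :
    (joukowskiLift Q n).eval w = w ^ n * Q.eval ((w + w⁻¹) / 2) := by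
  rw [joukowskiLift, eval_finsetSum, eval_eq_sum_range' (Nat.lt_succ_of_le hn), Finset.mul_sum]
  refine Finset.sum_congr rfl fun i hi => ?_
  have hin : i ≤ n := Nat.lt_succ_iff.mp (Finset.mem_range.mp hi)
  simp only [eval_mul, eval_pow, eval_C, eval_add, eval_one, eval_X]
  have hsq : w ^ 2 + 1 = 2 * w * ((w + w⁻¹) / 2) := by field_simp
  rw [hsq, ← pow_sub_mul_pow w hin, mul_pow, mul_pow]
  field_simp

theorem joukowski_eq_re_of_norm_eq_one {w : ℂ} (hw : ‖w‖ = 1) : (w + w⁻¹) / 2 = w.re := by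
  have hsq : normSq w = 1 := by rw [normSq_eq_norm_sq, hw, one_pow]
  rw [inv_def, hsq, inv_one, ofReal_one, mul_one, add_conj]
  push_cast
  ring

theorem norm_joukowski_deriv_of_norm_eq_one {w : ℂ} (hw : ‖w‖ = 1) :
    ‖(1 - (w ^ 2)⁻¹) / 2‖ = |w.im| := by
  have hw0 : w ≠ 0 := norm_ne_zero_iff.mp (by rw [hw]; exact one_ne_zero)
  have hconj : w⁻¹ = conj w := by
    rw [inv_def, normSq_eq_norm_sq, hw]; simp
  have : (1 - (w ^ 2)⁻¹) / 2 = w⁻¹ * (w - conj w) / 2 := by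
    rw [← hconj]; field_simp
  rw [this, sub_conj]
  simp [hw]

theorem hasDerivAt_eval_joukowski (Q : ℂ[X]) {w : ℂ} (hw : w ≠ 0) :
    HasDerivAt (fun w => Q.eval ((w + w⁻¹) / 2))
      (Q.derivative.eval ((w + w⁻¹) / 2) * ((1 - (w ^ 2)⁻¹) / 2)) w := by
  rw [sub_eq_add_neg]
  exact (Q.hasDerivAt _).comp w (((hasDerivAt_id w).add (hasDerivAt_inv hw)).div_const 2)

section BoundedOnInterval

variable {Q : ℂ[X]} {M : ℝ} (hQ : ∀ x : ℝ, x ∈ Set.Icc (-1) 1 → ‖Q.eval (x : ℂ)‖ ≤ M)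
include hQ

theorem norm_eval_joukowskiLift_le {n : ℕ} (hn : Q.natDegree ≤ n) {w : ℂ} (hw : ‖w‖ ≤ 1) :
    ‖(joukowskiLift Q n).eval w‖ ≤ M := by
  have hcircle : ∀ z ∈ frontier (ball (0 : ℂ) 1), ‖(joukowskiLift Q n).eval z‖ ≤ M := by
    intro z hz
    rw [frontier_ball 0 one_ne_zero, mem_sphere_zero_iff_norm] at hz
    rw [eval_joukowskiLift hn (norm_ne_zero_iff.mp (by rw [hz]; exact one_ne_zero)),
      joukowski_eq_re_of_norm_eq_one hz, norm_mul, norm_pow, hz, one_pow, one_mul]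
    exact hQ _ (abs_le.mp ((abs_re_le_norm z).trans hz.le))
  refine norm_le_of_forall_mem_frontier_norm_le isBounded_ball
    (joukowskiLift Q n).differentiable.diffContOnCl hcircle ?_
  rwa [closure_ball 0 one_ne_zero, mem_closedBall_zero_iff]

theorem norm_eval_joukowski_le {r : ℝ} (hr : 0 < r) {w : ℂ} (hw : r ≤ ‖w‖) (hw' : r ≤ ‖w⁻¹‖) :
    ‖Q.eval ((w + w⁻¹) / 2)‖ ≤ M / r ^ Q.natDegree := by
  wlog hw1 : ‖w‖ ≤ 1 generalizing w
  · have hw_inv : ‖w⁻¹‖ ≤ 1 := by rw [norm_inv]; exact inv_le_one_of_one_le₀ (by linarith)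
    have := this hw' (by rwa [inv_inv]) hw_inv
    rwa [inv_inv, add_comm] at this
  have hw0 : w ≠ 0 := norm_pos_iff.mp (hr.trans_le hw)
  have hlift := norm_eval_joukowskiLift_le hQ le_rfl hw1
  rw [eval_joukowskiLift le_rfl hw0, norm_mul, norm_pow] at hlift
  rw [le_div_iff₀ (by positivity)]
  calc ‖Q.eval ((w + w⁻¹) / 2)‖ * r ^ Q.natDegree
      ≤ ‖Q.eval ((w + w⁻¹) / 2)‖ * ‖w‖ ^ Q.natDegree := by gcongr
    _ ≤ M := by linarith

theorem norm_eval_joukowski_le_of_mem_sphere (hn : 0 < Q.natDegree) {w₀ z : ℂ} (hw₀ : ‖w₀‖ = 1)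
    (hz : z ∈ sphere w₀ (1 / (2 * Q.natDegree))) :
    ‖Q.eval ((z + z⁻¹) / 2)‖ ≤ 2 * M := by
  set R : ℝ := 1 / (2 * Q.natDegree)
  have hn1 : (1 : ℝ) ≤ Q.natDegree := by exact_mod_cast hn
  have hR : 0 < R := by positivity
  have hR2 : R ≤ 1 / 2 := by
    rw [div_le_div_iff₀ (by positivity) two_pos]; linarith
  rw [mem_sphere_iff_norm] at hz
  have hz_lower : 1 - R ≤ ‖z‖ := by
    have := norm_sub_norm_le w₀ z
    rw [hw₀, norm_sub_rev, hz] at this; linarith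
  have hz_upper : ‖z‖ ≤ 1 + R := by
    have := norm_le_norm_add_norm_sub' z w₀
    rw [hw₀, hz] at this; linarith
  have hz_inv : 1 - R ≤ ‖z⁻¹‖ := by
    rw [norm_inv, le_inv_comm₀ (by linarith) (by linarith), inv_eq_one_div,
      le_div_iff₀ (by linarith)]
    nlinarith
  have hM : 0 ≤ M := (norm_nonneg _).trans (hQ 0 (by norm_num))
  have hbernoulli : 1 / 2 ≤ (1 - R) ^ Q.natDegree := by
    have := one_add_mul_le_pow (a := -R) (by linarith) Q.natDegree
    have hnR : (Q.natDegree : ℝ) * R = 1 / 2 := by simp only [R]; field_simp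
    rw [← sub_eq_add_neg] at this; linarith
  calc ‖Q.eval ((z + z⁻¹) / 2)‖ ≤ M / (1 - R) ^ Q.natDegree :=
        norm_eval_joukowski_le hQ (by linarith) hz_lower hz_inv
    _ ≤ M / (1 / 2) := by gcongr
    _ = 2 * M := by ring

theorem bernstein_inequality {x : ℝ} (hx : x ∈ Set.Icc (-1) 1) :
    ‖Q.derivative.eval (x : ℂ)‖ * √(1 - x ^ 2) ≤ 4 * Q.natDegree * M := by
  rcases Nat.eq_zero_or_pos Q.natDegree with hn | hn
  · simp [derivative_of_natDegree_zero hn, hn]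
  set R : ℝ := 1 / (2 * Q.natDegree)
  have hR : 0 < R := by positivity
  have hR2 : R < 1 := by
    have : (1 : ℝ) ≤ Q.natDegree := by exact_mod_cast hn
    simp only [R]; rw [div_lt_one (by positivity)]; linarith
  set w₀ : ℂ := x + √(1 - x ^ 2) * I
  have hre : w₀.re = x := by simp [w₀]
  have him : w₀.im = √(1 - x ^ 2) := by simp [w₀]
  have hw₀ : ‖w₀‖ = 1 := by
    rw [← sq_eq_sq₀ (norm_nonneg _) zero_le_one, ← normSq_eq_norm_sq, normSq_apply, hre, him,
      ← sq, ← sq, sq_sqrt (by nlinarith [hx.1, hx.2])]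
    ring
  have hdiff : DiffContOnCl ℂ (fun w => Q.eval ((w + w⁻¹) / 2)) (ball w₀ R) := by
    refine DifferentiableOn.diffContOnCl fun w hw => ?_
    rw [closure_ball w₀ hR.ne', mem_closedBall, dist_eq_norm] at hw
    have hw0 : w ≠ 0 := by
      rintro rfl
      rw [zero_sub, norm_neg, hw₀] at hw; linarith
    exact (hasDerivAt_eval_joukowski Q hw0).differentiableAt.differentiableWithinAt
  have hcauchy := norm_deriv_le_of_forall_mem_sphere_norm_le hR hdiff
    fun z hz => norm_eval_joukowski_le_of_mem_sphere hQ hn hw₀ hz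
  have hw₀0 : w₀ ≠ 0 := norm_ne_zero_iff.mp (by rw [hw₀]; exact one_ne_zero)
  rw [(hasDerivAt_eval_joukowski Q hw₀0).deriv, joukowski_eq_re_of_norm_eq_one hw₀, hre, norm_mul,
    norm_joukowski_deriv_of_norm_eq_one hw₀, him, abs_of_nonneg (sqrt_nonneg _)] at hcauchy
  calc _ ≤ 2 * M / R := hcauchy
    _ = 4 * Q.natDegree * M := by simp only [R]; field_simp; ring

end BoundedOnInterval

theorem eval_map_algebraMap_ofReal (q : ℝ[X]) (t : ℝ) :
    (q.map (algebraMap ℝ ℂ)).eval (t : ℂ) = q.eval t := by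
  rw [eval_map_algebraMap]
  exact (ofReal_eval q t).symm

theorem bernstein_inequality_Icc (q : ℝ[X]) {a b M : ℝ} (hab : a < b)
    (hq : ∀ x ∈ Set.Icc a b, |q.eval x| ≤ M) {x : ℝ} (hx : x ∈ Set.Icc a b) :
    |q.derivative.eval x| * √((x - a) * (b - x)) ≤ 4 * q.natDegree * M := by
  set c : ℝ := (b - a) / 2
  set m : ℝ := (a + b) / 2
  have hc : 0 < c := by simp only [c]; linarith
  set Q : ℂ[X] := (q.comp (C c * X + C m)).map (algebraMap ℝ ℂ)
  have hQdeg : Q.natDegree = q.natDegree := by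
    rw [natDegree_map, natDegree_comp, natDegree_linear hc.ne', mul_one]
  have hQeval : ∀ t : ℝ, Q.eval (t : ℂ) = ((q.eval (c * t + m) : ℝ) : ℂ) := fun t => by
    rw [eval_map_algebraMap_ofReal]
    simp
  have hQderiv : ∀ t : ℝ,
      Q.derivative.eval (t : ℂ) = ((c * q.derivative.eval (c * t + m) : ℝ) : ℂ) := fun t => by
    rw [derivative_map, eval_map_algebraMap_ofReal, derivative_comp]
    simp
  have hQbound : ∀ t : ℝ, t ∈ Set.Icc (-1) 1 → ‖Q.eval (t : ℂ)‖ ≤ M := by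
    rintro t ⟨ht1, ht2⟩
    rw [hQeval, norm_real, Real.norm_eq_abs]
    refine hq _ ⟨?_, ?_⟩ <;> simp only [c, m] <;> nlinarith
  set t : ℝ := (x - m) / c
  have hct : c * t + m = x := by simp only [t]; field_simp; ring
  have ht : t ∈ Set.Icc (-1) 1 := by
    simp only [t, Set.mem_Icc, le_div_iff₀ hc, div_le_iff₀ hc]
    constructor <;> simp only [c, m] <;> linarith [hx.1, hx.2]
  have hsqrt : √((x - a) * (b - x)) = c * √(1 - t ^ 2) := by
    rw [← sqrt_sq hc.le, ← sqrt_mul (sq_nonneg c)]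
    congr 1
    simp only [t]; field_simp; simp only [c, m]; ring
  have := bernstein_inequality hQbound ht
  rw [hQderiv, hct, hQdeg, norm_real, Real.norm_eq_abs, abs_mul, abs_of_pos hc] at this
  rw [hsqrt]
  linarith

end Polynomial

theorem exists_derivative_eval_ge_of_abs_sub_exp_le {q : ℝ[X]} {β : ℝ} (hβ : 1 ≤ β)
    (hq : ∀ x ∈ Set.Icc (-1 : ℝ) 0, |q.eval x - exp (β * x)| ≤ 0.1) :
    ∃ ξ ∈ Set.Ioo (-1 / 2 : ℝ) 0, 4 * β / 15 ≤ q.derivative.eval ξ := by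
  set t : ℝ := 1 / (2 * β)
  have ht : 0 < t := by positivity
  have ht2 : t ≤ 1 / 2 := by
    simp only [t]; rw [div_le_div_iff₀ (by positivity) two_pos]; linarith
  have hq0 := (abs_le.mp (hq 0 ⟨by norm_num, le_rfl⟩)).1
  have hqt := (abs_le.mp (hq (-t) ⟨by linarith, by linarith⟩)).2
  rw [mul_zero, exp_zero] at hq0
  have hexp : exp (β * -t) ≤ 2 / 3 := by
    have hβt : β * -t = -(1 / 2) := by simp only [t]; field_simp
    have := add_one_le_exp (1 / 2 : ℝ)
    rw [hβt, exp_neg, inv_le_comm₀ (exp_pos _) (by norm_num)]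
    linarith
  obtain ⟨ξ, hξ, hslope⟩ := exists_hasDerivAt_eq_slope (fun y => q.eval y)
    (fun y => q.derivative.eval y) (neg_lt_zero.mpr ht) q.continuous.continuousOn
    fun y _ => q.hasDerivAt y
  refine ⟨ξ, ⟨by linarith [hξ.1], hξ.2⟩, ?_⟩
  rw [hslope, sub_neg_eq_add, zero_add, le_div_iff₀ ht]
  have hβt : β * t = 1 / 2 := by simp only [t]; field_simp
  nlinarith

/-- **Degree lower bound for bounded approximations of the exponential**
(Corollary 3.19): any polynomial `0.1`-close to `exp(βx)` on `[-1, 0]` and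
bounded by `1` on `[0, δ]` has degree `Ω(β√δ)`. -/
theorem exp_bounded_approx_degree_lower_bound :
    ∃ c : ℝ, 0 < c ∧
      ∀ β δ : ℝ, 1 ≤ β → 0 < δ → δ ≤ 1 →
        ∀ q : Polynomial ℝ,
          (∀ x : ℝ, x ∈ Set.Icc (-1 : ℝ) 0 → |q.eval x - Real.exp (β * x)| ≤ 0.1) →
          (∀ x : ℝ, x ∈ Set.Icc (0 : ℝ) δ → |q.eval x| ≤ 1) →
          (q.natDegree : ℝ) ≥ c * β * Real.sqrt δ := by
  refine ⟨1 / 33, by norm_num, fun β δ hβ hδ0 hδ1 q hleft hright => ?_⟩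
  have hbound : ∀ x ∈ Set.Icc (-1) δ, |q.eval x| ≤ 11 / 10 := by
    intro x hx
    rcases le_or_gt x 0 with hx0 | hx0
    · have hexp : exp (β * x) ≤ 1 := exp_le_one_iff.mpr (by nlinarith)
      have := abs_le.mp (hleft x ⟨hx.1, hx0⟩)
      exact abs_le.mpr ⟨by linarith [exp_pos (β * x)], by linarith⟩
    · linarith [hright x ⟨hx0.le, hx.2⟩]
  obtain ⟨ξ, hξ, hderiv⟩ := exists_derivative_eval_ge_of_abs_sub_exp_le hβ hleft
  have hbern := bernstein_inequality_Icc q (by linarith) hbound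
    (x := ξ) ⟨by linarith [hξ.1], by linarith [hξ.2]⟩
  have hsqrt : √δ / 2 ≤ √((ξ - -1) * (δ - ξ)) := by
    rw [le_sqrt (by positivity) (by nlinarith [hξ.1, hξ.2]), div_pow, sq_sqrt hδ0.le]
    nlinarith [hξ.1, hξ.2]
  rw [abs_of_pos (by linarith)] at hbern
  have : 4 * β / 15 * (√δ / 2) ≤ 4 * q.natDegree * (11 / 10) :=
    (mul_le_mul hderiv hsqrt (by positivity) (by linarith)).trans hbern
  linarith
end

section
/- There exist universal constants C > 0 and c > 0 such that for every natural number n ≥ 0 and all reals x, y with |y| ≤ c, the Chebyshev polynomial of the first kind evaluated at the complex number x + iy satisfies: if |x| ≤ 1 then |T_n(x + iy)| ≤ (1 + C·√|y|)^n, and if |x| > 1 then |T_n(x + iy)| ≤ (|x| + √(x² − 1) + C·√|x·y|)^n. -/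
/-!
Write `x + iy = cos θ` with `b = Im θ ≥ 0`, so that `x = cos a cosh b` and `y = -sin a sinh b`
for `a = Re θ`. Since `T_n (cos θ) = cos (nθ)`, we get `|T_n (x + iy)| ≤ e^{nb}`, and it remains to
bound `e^b = cosh b + sinh b`.

If `|x| ≤ 1`, then `sinh b ≤ |sin a| cosh b`, hence `sinh² b ≤ cosh b · |y|`; as `|y| ≤ 1/4` this
keeps `b` bounded and `e^b ≤ 1 + 2 sinh b ≤ 1 + 3√|y|`.

If `|x| > 1`, then `|sin a| ≤ |cos a| sinh b`, and the identity
`sinh² b = (x² - 1) + (sin a cosh b)²` gives `e^b ≤ |x| + √(x² - 1) + 2 |sin a| cosh b`, where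
`(|sin a| cosh b)² ≤ 2 |x y|`.
-/

open Real Polynomial Complex

namespace Real

variable {a b : ℝ}

lemma cosh_le_one_add_sinh (hb : 0 ≤ b) : cosh b ≤ 1 + sinh b := by
  have : cosh b - sinh b ≤ 1 := by rw [cosh_sub_sinh]; exact exp_le_one_iff.mpr (by linarith)
  linarith

lemma le_mul_sqrt_of_sq_le {u v k : ℝ} (hk : 0 ≤ k) (h : u ^ 2 ≤ k ^ 2 * v) : u ≤ k * √v := by
  simpa only [sqrt_mul (sq_nonneg k), sqrt_sq hk] using le_sqrt_of_sq_le h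

lemma sinh_le_abs_sin_mul_cosh (hb : 0 ≤ b) (hx : |cos a * cosh b| ≤ 1) :
    sinh b ≤ |sin a| * cosh b := by
  have hx2 : (cos a * cosh b) ^ 2 ≤ 1 := (sq_le_one_iff_abs_le_one _).mpr hx
  rw [← sq_le_sq₀ (sinh_nonneg_iff.mpr hb) (by positivity), mul_pow, sq_abs]
  nlinarith [sin_sq_add_cos_sq a, cosh_sq b]

lemma abs_sin_le_abs_cos_mul_sinh (hx : 1 ≤ |cos a * cosh b|) (hb : 0 ≤ b) :
    |sin a| ≤ |cos a| * sinh b := by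
  have hx2 : 1 ≤ (cos a * cosh b) ^ 2 := (one_le_sq_iff_one_le_abs _).mpr hx
  rw [← sq_le_sq₀ (abs_nonneg _) (mul_nonneg (abs_nonneg _) (sinh_nonneg_iff.mpr hb)),
    mul_pow, sq_abs, sq_abs]
  nlinarith [sin_sq_add_cos_sq a, cosh_sq b]

lemma exp_le_of_abs_cos_mul_cosh_le_one (hb : 0 ≤ b) (hx : |cos a * cosh b| ≤ 1)
    (hy : |sin a * sinh b| ≤ 1 / 4) : exp b ≤ 1 + 3 * √|sin a * sinh b| := by
  have hsh0 : 0 ≤ sinh b := sinh_nonneg_iff.mpr hb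
  have hsh : sinh b ≤ |sin a| * cosh b := sinh_le_abs_sin_mul_cosh hb hx
  have hch : cosh b ≤ 1 + sinh b := cosh_le_one_add_sinh hb
  have hY : |sin a * sinh b| = |sin a| * sinh b := by rw [abs_mul, abs_of_nonneg hsh0]
  have hsh_sq : sinh b ^ 2 ≤ cosh b * |sin a * sinh b| := by
    rw [hY]; nlinarith
  have hsh1 : sinh b ≤ 1 := by
    nlinarith [mul_le_mul_of_nonneg_left hy (cosh_pos b).le]
  have key : 2 * sinh b ≤ 3 * √|sin a * sinh b| :=
    le_mul_sqrt_of_sq_le (by norm_num) (by nlinarith [abs_nonneg (sin a * sinh b)])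
  rw [← cosh_add_sinh]
  linarith

lemma exp_le_of_one_lt_abs_cos_mul_cosh (hb : 0 ≤ b) (hx : 1 < |cos a * cosh b|)
    (hy : |sin a * sinh b| ≤ 1 / 4) :
    exp b ≤ |cos a * cosh b| + √((cos a * cosh b) ^ 2 - 1) +
      3 * √|cos a * cosh b * (sin a * sinh b)| := by
  set c := |cos a|
  set s := |sin a|
  have hsh0 : 0 ≤ sinh b := sinh_nonneg_iff.mpr hb
  have hch0 : 0 < cosh b := cosh_pos b
  have hsc : s ^ 2 + c ^ 2 = 1 := by simp only [s, c, sq_abs, sin_sq_add_cos_sq]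
  have hX : |cos a * cosh b| = c * cosh b := by rw [abs_mul, abs_of_pos hch0]
  have hY : |sin a * sinh b| = s * sinh b := by rw [abs_mul, abs_of_nonneg hsh0]
  have hX2 : (cos a * cosh b) ^ 2 = (c * cosh b) ^ 2 := by rw [← hX, sq_abs]
  have hs : s ≤ c * sinh b := abs_sin_le_abs_cos_mul_sinh hx.le hb
  rw [hX] at hx ⊢
  rw [hY] at hy
  rw [abs_mul, hX, hY, hX2]
  have hs_ch : cosh b * s ≤ 2 * (c * sinh b) := by
    -- for `cosh b > 2`, the bound `|y| ≤ 1/4` forces `|sin a| ≤ |cos a|`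
    rcases le_or_gt (cosh b) 2 with h | h
    · nlinarith [abs_nonneg (sin a)]
    · have : cosh b ≤ 2 * sinh b := by nlinarith [cosh_sq b]
      nlinarith [abs_nonneg (sin a), abs_nonneg (cos a), cosh_sq b]
  have hsh : sinh b ≤ √((c * cosh b) ^ 2 - 1) + cosh b * s := by
    have hid : sinh b ^ 2 = ((c * cosh b) ^ 2 - 1) + (cosh b * s) ^ 2 := by
      linear_combination -(cosh_sq b) - cosh b ^ 2 * hsc
    rw [← sq_le_sq₀ hsh0 (by positivity), hid, add_sq,
      sq_sqrt (show 0 ≤ (c * cosh b) ^ 2 - 1 by nlinarith)]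
    have : 0 ≤ √((c * cosh b) ^ 2 - 1) * (cosh b * s) := by positivity
    linarith
  have hch : cosh b ≤ c * cosh b + cosh b * s := by
    have : 1 ≤ c + s := by nlinarith [abs_nonneg (sin a), abs_nonneg (cos a)]
    nlinarith
  have key : 2 * (cosh b * s) ≤ 3 * √(c * cosh b * (s * sinh b)) := by
    have hs_ch' := mul_le_mul_of_nonneg_left hs_ch (by positivity : 0 ≤ cosh b * s)
    have : 0 ≤ c * cosh b * (s * sinh b) := by positivity
    exact le_mul_sqrt_of_sq_le (by norm_num) (by nlinarith)
  rw [← cosh_add_sinh]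
  linarith

end Real

namespace Complex

lemma norm_cos_le_exp_abs_im (w : ℂ) : ‖cos w‖ ≤ Real.exp |w.im| := by
  have h₁ : ‖exp (w * I)‖ ≤ Real.exp |w.im| := by
    simpa [norm_exp] using neg_le_abs w.im
  have h₂ : ‖exp (-w * I)‖ ≤ Real.exp |w.im| := by
    simpa [norm_exp] using le_abs_self w.im
  calc ‖cos w‖ ≤ (‖exp (w * I)‖ + ‖exp (-w * I)‖) / 2 := by
        rw [cos, norm_div]; simp only [Complex.norm_two]; gcongr; exact norm_add_le _ _
    _ ≤ Real.exp |w.im| := by linarith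

lemma exists_cos_eq_and_im_nonneg (z : ℂ) : ∃ θ : ℂ, cos θ = z ∧ 0 ≤ θ.im := by
  obtain ⟨θ, rfl⟩ := cos_surjective z
  rcases le_total 0 θ.im with h | h
  · exact ⟨θ, rfl, h⟩
  · exact ⟨-θ, cos_neg θ, by simpa using h⟩

lemma re_cos (θ : ℂ) : (cos θ).re = Real.cos θ.re * Real.cosh θ.im := by
  rw [cos_eq]; simp [← ofReal_cos, ← ofReal_sin, ← ofReal_cosh, ← ofReal_sinh]

lemma im_cos (θ : ℂ) : (cos θ).im = -(Real.sin θ.re * Real.sinh θ.im) := by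
  rw [cos_eq]; simp [← ofReal_cos, ← ofReal_sin, ← ofReal_cosh, ← ofReal_sinh]

end Complex

lemma Polynomial.Chebyshev.norm_T_complex_cos_le (n : ℕ) (θ : ℂ) :
    ‖(T ℂ n).eval (cos θ)‖ ≤ Real.exp |θ.im| ^ n := by
  rw [T_complex_cos, ← Real.exp_nat_mul, ← abs_of_nonneg (Nat.cast_nonneg (α := ℝ) n), ← abs_mul]
  simpa using Complex.norm_cos_le_exp_abs_im (n * θ)

/-- **Growth of Chebyshev polynomials near `[-1, 1]` in the complex plane**
(Lemma 3.21): for `|y| ≤ c`, `|T_n(x + iy)| ≤ (1 + C√|y|)^n` when `|x| ≤ 1`,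
and `|T_n(x + iy)| ≤ (|x| + √(x²-1) + C√|xy|)^n` when `|x| > 1`. -/
theorem chebyshev_complex_growth :
    ∃ C c : ℝ, 0 < C ∧ 0 < c ∧
      ∀ (n : ℕ) (x y : ℝ), |y| ≤ c →
        (|x| ≤ 1 →
          ‖(Polynomial.Chebyshev.T ℂ (n : ℤ)).eval ((x : ℂ) + (y : ℂ) * Complex.I)‖ ≤
            (1 + C * Real.sqrt |y|) ^ n) ∧
        (1 < |x| →
          ‖(Polynomial.Chebyshev.T ℂ (n : ℤ)).eval ((x : ℂ) + (y : ℂ) * Complex.I)‖ ≤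
            (|x| + Real.sqrt (x ^ 2 - 1) + C * Real.sqrt |x * y|) ^ n) := by
  refine ⟨3, 1 / 4, by norm_num, by norm_num, fun n x y hy => ?_⟩
  obtain ⟨θ, hθ, hb⟩ := Complex.exists_cos_eq_and_im_nonneg (x + y * I)
  have hT := Chebyshev.norm_T_complex_cos_le n θ
  rw [hθ, abs_of_nonneg hb] at hT
  have hre : (cos θ).re = x := by simp [hθ]
  have him : (cos θ).im = y := by simp [hθ]
  rw [re_cos] at hre
  rw [im_cos] at him
  subst hre him
  rw [abs_neg] at hy
  refine ⟨fun hx => hT.trans ?_, fun hx => hT.trans ?_⟩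
  · rw [abs_neg]
    exact pow_le_pow_left₀ (exp_nonneg _) (exp_le_of_abs_cos_mul_cosh_le_one hb hx hy) n
  · rw [mul_neg, abs_neg]
    exact pow_le_pow_left₀ (exp_nonneg _) (exp_le_of_one_lt_abs_cos_mul_cosh hb hx hy) n
end
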